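/- arXiv:2312.14674 — 6 statements merged into one kernel-verified Lean document; each statement's English description precedes it below -/
import Mathlib

section
/- Let q ≥ 2 be an integer. The function β ↦ (Σ_{i∈Z_q} w_L(i) e^{−β w_L(i)}) / (Σ_{i∈Z_q} e^{−β w_L(i)}) is strictly decreasing on ℝ and maps ℝ bijectively onto the open interval (0, ⌊q/2⌋). In particular, for every real δ with 0 < δ < ⌊q/2⌋ there is a unique real β such that Σ_{i∈Z_q} w_L(i) e^{−β w_L(i)} = δ · Σ_{i∈Z_q} e^{−β w_L(i)}; moreover β > 0 if and only if δ < δ_q, and β = 0 if and only if δ = δ_q. -/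
/-!
`Ffun q β` is the mean Lee weight under the Gibbs distribution `∝ e^{-β w_L}` on `Z_q`. For any
finite family of weights, not all equal, such a mean is strictly decreasing in `β`: symmetrising
over pairs writes `N(β₁) Z(β₂) - N(β₂) Z(β₁)` as a sum of terms
`(w i - w j) (e^{-β₁ w i - β₂ w j} - e^{-β₁ w j - β₂ w i})`, all of one sign. As `β → ∓∞` the
distribution concentrates on the maximal and minimal weights, `⌊q/2⌋` and `0`, so by continuity the
mean is a bijection of `ℝ` onto the interval between them. At `β = 0` it is the uniform mean `δ_q`,
which locates the sign of the root `β`.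
-/

/-- The Lee weight of the residue `i ∈ {0,…,q-1}` is `min(i, q-i)`. -/
def leeW (q i : ℕ) : ℕ := min i (q - i)

/-- `Σ_{i∈Z_q} w_L(i) e^{-β w_L(i)}`. -/
noncomputable def numFun (q : ℕ) (β : ℝ) : ℝ :=
  ∑ i ∈ Finset.range q, (leeW q i : ℝ) * Real.exp (-β * (leeW q i : ℝ))

/-- The normalization constant `Z(β) = Σ_{i∈Z_q} e^{-β w_L(i)}`. -/
noncomputable def Zfun (q : ℕ) (β : ℝ) : ℝ :=
  ∑ i ∈ Finset.range q, Real.exp (-β * (leeW q i : ℝ))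

/-- The mean Lee weight under the Boltzmann distribution with parameter `β`. -/
noncomputable def Ffun (q : ℕ) (β : ℝ) : ℝ := numFun q β / Zfun q β

/-- `δ_q`, the mean Lee weight of a uniform element of `Z_q`. -/
noncomputable def deltaQ (q : ℕ) : ℝ :=
  if q % 2 = 0 then (q : ℝ) / 4 else ((q : ℝ) ^ 2 - 1) / (4 * q)

open Filter Topology Finset Real

lemma StrictAnti.bijOn_Ioo_of_tendsto {f : ℝ → ℝ} {m M : ℝ} (hf : StrictAnti f)
    (hc : Continuous f) (htop : Tendsto f atTop (𝓝 m)) (hbot : Tendsto f atBot (𝓝 M)) :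
    Set.BijOn f Set.univ (Set.Ioo m M) := by
  refine ⟨fun x _ => ⟨?_, ?_⟩, hf.injective.injOn, ?_⟩
  · exact (hf.antitone.le_of_tendsto htop (x + 1)).trans_lt (hf (lt_add_one x))
  · exact (hf (sub_one_lt x)).trans_le (hf.antitone.ge_of_tendsto hbot (x - 1))
  · exact isPreconnected_univ.intermediate_value_Ioo (by simp) (by simp) hc.continuousOn htop hbot

lemma mul_sub_exp_cross_pos {β₁ β₂ a b : ℝ} (hβ : β₁ < β₂) (hab : a ≠ b) :
    0 < (a - b) * (exp (-β₁ * a) * exp (-β₂ * b) - exp (-β₁ * b) * exp (-β₂ * a)) := by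
  rw [← exp_add, ← exp_add]
  rcases hab.lt_or_gt with h | h
  · exact mul_pos_of_neg_of_neg (by linarith) (sub_neg.2 (exp_lt_exp.2 (by nlinarith)))
  · exact mul_pos (by linarith) (sub_pos.2 (exp_lt_exp.2 (by nlinarith)))

noncomputable def gibbsMean {ι : Type*} (s : Finset ι) (w : ι → ℝ) (β : ℝ) : ℝ :=
  (∑ i ∈ s, w i * exp (-β * w i)) / ∑ i ∈ s, exp (-β * w i)

section gibbsMean

variable {ι : Type*} {s : Finset ι} {w : ι → ℝ}

lemma gibbsMean_zero (s : Finset ι) (w : ι → ℝ) : gibbsMean s w 0 = (∑ i ∈ s, w i) / #s := by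
  simp [gibbsMean]

lemma gibbsMean_neg (s : Finset ι) (w : ι → ℝ) (β : ℝ) :
    gibbsMean s (-w) β = -gibbsMean s w (-β) := by
  simp [gibbsMean, neg_div]

lemma continuous_gibbsMean (hs : s.Nonempty) : Continuous (gibbsMean s w) := by
  unfold gibbsMean
  refine Continuous.div (by fun_prop) (by fun_prop) fun β => ?_
  exact (sum_pos (fun i _ => exp_pos _) hs).ne'

lemma two_mul_cross_sub_eq (w : ι → ℝ) (β₁ β₂ : ℝ) :
    2 * ((∑ i ∈ s, w i * exp (-β₁ * w i)) * (∑ j ∈ s, exp (-β₂ * w j))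
      - (∑ i ∈ s, w i * exp (-β₂ * w i)) * (∑ j ∈ s, exp (-β₁ * w j)))
    = ∑ i ∈ s, ∑ j ∈ s, (w i - w j) *
        (exp (-β₁ * w i) * exp (-β₂ * w j) - exp (-β₁ * w j) * exp (-β₂ * w i)) := by
  set f : ι → ι → ℝ := fun i j =>
    w i * exp (-β₁ * w i) * exp (-β₂ * w j) - w i * exp (-β₂ * w i) * exp (-β₁ * w j)
  have hf : ∑ i ∈ s, ∑ j ∈ s, f i j
      = (∑ i ∈ s, w i * exp (-β₁ * w i)) * (∑ j ∈ s, exp (-β₂ * w j))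
        - (∑ i ∈ s, w i * exp (-β₂ * w i)) * (∑ j ∈ s, exp (-β₁ * w j)) := by
    simp only [f, sum_mul_sum, ← sum_sub_distrib]
  calc _ = ∑ i ∈ s, ∑ j ∈ s, f i j + ∑ i ∈ s, ∑ j ∈ s, f j i := by
        rw [← hf, two_mul]; congr 1; exact sum_comm
    _ = _ := by
      rw [← sum_add_distrib]
      refine sum_congr rfl fun i _ => ?_
      rw [← sum_add_distrib]
      exact sum_congr rfl fun j _ => by ring

lemma gibbsMean_strictAnti (hw : ∃ i ∈ s, ∃ j ∈ s, w i ≠ w j) : StrictAnti (gibbsMean s w) := by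
  obtain ⟨i, hi, j, hj, hij⟩ := hw
  intro β₁ β₂ hβ
  have hZ : ∀ β, 0 < ∑ i ∈ s, exp (-β * w i) := fun β => sum_pos (fun _ _ => exp_pos _) ⟨i, hi⟩
  rw [gibbsMean, gibbsMean, div_lt_div_iff₀ (hZ β₂) (hZ β₁), ← sub_pos,
    ← mul_pos_iff_of_pos_left two_pos, two_mul_cross_sub_eq]
  have hterm : ∀ a b, 0 ≤ (w a - w b) *
      (exp (-β₁ * w a) * exp (-β₂ * w b) - exp (-β₁ * w b) * exp (-β₂ * w a)) := fun a b => by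
    rcases eq_or_ne (w a) (w b) with h | h
    · simp [h]
    · exact (mul_sub_exp_cross_pos hβ h).le
  refine sum_pos' (fun a _ => sum_nonneg fun b _ => hterm a b) ⟨i, hi, ?_⟩
  exact sum_pos' (fun b _ => hterm i b) ⟨j, hj, mul_sub_exp_cross_pos hβ hij⟩

lemma tendsto_gibbsMean_atBot {M : ℝ} (hM : ∀ i ∈ s, w i ≤ M) (hMs : ∃ i ∈ s, w i = M) :
    Tendsto (gibbsMean s w) atBot (𝓝 M) := by
  set E : ι → ℝ → ℝ := fun i β => exp (β * (M - w i))
  set c : ℝ := ∑ i ∈ s, if w i = M then 1 else 0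
  have hc : 0 < c := by
    obtain ⟨i, hi, hiM⟩ := hMs
    exact sum_pos' (fun _ _ => by positivity) ⟨i, hi, by simp [hiM]⟩
  have hE : ∀ i ∈ s, Tendsto (E i) atBot (𝓝 (if w i = M then 1 else 0)) := by
    intro i hi
    by_cases h : w i = M
    · simp [E, h]
    · simp only [E, if_neg h]
      exact tendsto_exp_atBot.comp
        (tendsto_id.atBot_mul_const (sub_pos.2 ((hM i hi).lt_of_ne h)))
  have hnum : Tendsto (fun β => ∑ i ∈ s, w i * E i β) atBot (𝓝 (M * c)) := by
    rw [mul_sum]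
    refine tendsto_finsetSum _ fun i hi => ?_
    convert (hE i hi).const_mul (w i) using 2
    split_ifs with h <;> simp [h]
  have hrescale : ∀ β, gibbsMean s w β = (∑ i ∈ s, w i * E i β) / ∑ i ∈ s, E i β := by
    intro β
    have hE' : ∀ i, E i β = exp (-β * w i) * exp (β * M) := fun i => by
      simp only [E, ← exp_add]; ring_nf
    simp only [hE', ← mul_assoc, ← sum_mul, mul_div_mul_right _ _ (exp_ne_zero _), gibbsMean]
  convert hnum.div (tendsto_finsetSum _ hE) hc.ne' using 1
  · exact funext hrescale
  · rw [mul_div_cancel_right₀ _ hc.ne']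

lemma tendsto_gibbsMean_atTop {m : ℝ} (hm : ∀ i ∈ s, m ≤ w i) (hms : ∃ i ∈ s, w i = m) :
    Tendsto (gibbsMean s w) atTop (𝓝 m) := by
  have hneg : Tendsto (gibbsMean s (-w)) atBot (𝓝 (-m)) := by
    obtain ⟨i, hi, him⟩ := hms
    exact tendsto_gibbsMean_atBot (fun j hj => neg_le_neg (hm j hj)) ⟨i, hi, by simp [him]⟩
  have := (hneg.comp tendsto_neg_atTop_atBot).neg
  simpa [Function.comp_def, gibbsMean_neg] using this

lemma bijOn_gibbsMean {m M : ℝ} (hm : ∀ i ∈ s, m ≤ w i) (hM : ∀ i ∈ s, w i ≤ M)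
    (hms : ∃ i ∈ s, w i = m) (hMs : ∃ i ∈ s, w i = M) (hmM : m < M) :
    Set.BijOn (gibbsMean s w) Set.univ (Set.Ioo m M) := by
  obtain ⟨i, hi, him⟩ := hms
  obtain ⟨j, hj, hjM⟩ := hMs
  have hanti := gibbsMean_strictAnti (w := w) ⟨i, hi, j, hj, by rw [him, hjM]; exact hmM.ne⟩
  exact hanti.bijOn_Ioo_of_tendsto (continuous_gibbsMean ⟨i, hi⟩)
    (tendsto_gibbsMean_atTop hm ⟨i, hi, him⟩) (tendsto_gibbsMean_atBot hM ⟨j, hj, hjM⟩)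

end gibbsMean

lemma leeW_zero (q : ℕ) : leeW q 0 = 0 := by simp [leeW]

lemma leeW_le_half (q i : ℕ) : leeW q i ≤ q / 2 := by simp only [leeW]; omega

lemma leeW_half (q : ℕ) : leeW q (q / 2) = q / 2 := by simp only [leeW]; omega

lemma sum_range_leeW_add_two (n : ℕ) :
    ∑ i ∈ range (n + 2), leeW (n + 2) i = ∑ i ∈ range n, leeW n i + (n + 1) := by
  have hshift : ∀ j ∈ range (n + 1), leeW (n + 2) (j + 1) = leeW n j + 1 := fun j hj => by
    simp only [mem_range] at hj; simp only [leeW]; omega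
  rw [sum_range_succ', sum_congr rfl hshift, sum_add_distrib, sum_range_succ]
  simp [leeW]

lemma four_mul_sum_leeW (q : ℕ) : 4 * ∑ i ∈ range q, leeW q i + q % 2 = q * q := by
  induction q using Nat.twoStepInduction with
  | zero => simp
  | one => simp [leeW]
  | more n ih _ =>
    rw [sum_range_leeW_add_two]
    ring_nf at ih ⊢
    omega

lemma Ffun_eq_gibbsMean (q : ℕ) : Ffun q = gibbsMean (range q) (fun i => (leeW q i : ℝ)) := rfl

lemma Ffun_zero (q : ℕ) : Ffun q 0 = deltaQ q := by
  have hsum : (4 : ℝ) * ∑ i ∈ range q, (leeW q i : ℝ) = q ^ 2 - (q % 2 : ℕ) := by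
    rw [eq_sub_iff_add_eq, sq]; exact_mod_cast four_mul_sum_leeW q
  rw [Ffun_eq_gibbsMean, gibbsMean_zero, card_range, deltaQ]
  split_ifs with h
  · rw [h] at hsum
    push_cast at hsum
    rcases eq_or_ne q 0 with rfl | hq
    · simp
    · field_simp; linarith
  · rw [show q % 2 = 1 by omega] at hsum
    push_cast at hsum
    have hq : (q : ℝ) ≠ 0 := by norm_cast; omega
    field_simp; linarith

lemma numFun_eq_mul_Zfun_iff {q : ℕ} (hq : q ≠ 0) (β δ : ℝ) :
    numFun q β = δ * Zfun q β ↔ Ffun q β = δ := by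
  have hZ : 0 < Zfun q β := sum_pos (fun _ _ => exp_pos _) (nonempty_range_iff.2 hq)
  rw [Ffun, div_eq_iff hZ.ne']

theorem stmt1 (q : ℕ) (hq : 2 ≤ q) :
    StrictAnti (Ffun q)
    ∧ Set.BijOn (Ffun q) Set.univ (Set.Ioo (0 : ℝ) ((q / 2 : ℕ) : ℝ))
    ∧ ∀ δ : ℝ, 0 < δ → δ < ((q / 2 : ℕ) : ℝ) →
        (∃! β : ℝ, numFun q β = δ * Zfun q β)
        ∧ ∀ β : ℝ, numFun q β = δ * Zfun q β →
            ((0 < β ↔ δ < deltaQ q) ∧ (β = 0 ↔ δ = deltaQ q)) := by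
  have h0 : 0 ∈ range q := mem_range.2 (by omega)
  have hhalf : q / 2 ∈ range q := mem_range.2 (by omega)
  have hanti : StrictAnti (Ffun q) := gibbsMean_strictAnti
    ⟨0, h0, q / 2, hhalf, by simp only [leeW_zero, leeW_half]; norm_cast; omega⟩
  have hbij : Set.BijOn (Ffun q) Set.univ (Set.Ioo 0 (q / 2 : ℕ)) :=
    bijOn_gibbsMean (fun _ _ => Nat.cast_nonneg _) (fun i _ => by exact_mod_cast leeW_le_half q i)
      ⟨0, h0, by simp [leeW_zero]⟩ ⟨q / 2, hhalf, by rw [leeW_half]⟩ (by norm_cast; omega)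
  have hroot := numFun_eq_mul_Zfun_iff (q := q) (by omega)
  refine ⟨hanti, hbij, fun δ hδ₀ hδ₁ => ⟨?_, fun β hβ => ?_⟩⟩
  · obtain ⟨β, -, hβ⟩ := hbij.surjOn ⟨hδ₀, hδ₁⟩
    exact ⟨β, (hroot β δ).2 hβ, fun γ hγ => hanti.injective (((hroot γ δ).1 hγ).trans hβ.symm)⟩
  · obtain rfl := (hroot β δ).1 hβ
    rw [← Ffun_zero]
    exact ⟨hanti.lt_iff_gt.symm, hanti.injective.eq_iff.symm⟩
end

section
/- Let q ≥ 2 and n ≥ 1 be integers and let t be an integer with 0 < t < n⌊q/2⌋, and set δ = t/n. Then the normalized logarithmic surface spectrum satisfies σ^{(n)}_t := (1/n) log₂ |S^n_{t,q}| ≤ H_δ; equivalently, the number of vectors in Z_q^n of Lee weight exactly t is at most 2^{n H_δ}. -/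
/-- The Lee weight of a vector over `Z_q`. -/
def leeWtV {q n : ℕ} (x : Fin n → ZMod q) : ℕ :=
  ∑ k, min (x k).val (q - (x k).val)

/-- The Boltzmann pmf on `Z_q` with parameter `β`. -/
noncomputable def boltz (q : ℕ) (β : ℝ) (i : ℕ) : ℝ :=
  Real.exp (-β * (leeW q i : ℝ)) / Zfun q β

/-- Shannon entropy (base 2) of the Boltzmann distribution with parameter `β`. -/
noncomputable def entB (q : ℕ) (β : ℝ) : ℝ :=
  -∑ i ∈ Finset.range q, boltz q β i * Real.logb 2 (boltz q β i)

lemma sum_zmod_val {q : ℕ} [NeZero q] (g : ℕ → ℝ) :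
    ∑ a : ZMod q, g a.val = ∑ i ∈ Finset.range q, g i := by
  apply Finset.sum_nbij' (i := fun a : ZMod q => a.val) (j := fun i : ℕ => (i : ZMod q))
  · intro a _; exact Finset.mem_range.2 (ZMod.val_lt a)
  · intro i _; exact Finset.mem_univ _
  · intro a _; exact ZMod.natCast_rightInverse a
  · intro i hi; exact ZMod.val_cast_of_lt (Finset.mem_range.1 hi)
  · intro a _; rfl

/-- Growth rate of the surface spectrum: the number of vectors in `Z_q^n` of
Lee weight exactly `t` is at most `2^(n H_δ)` where `δ = t/n`. -/
theorem stmt3 (q n t : ℕ) [NeZero q] (hq : 2 ≤ q) (hn : 1 ≤ n)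
    (ht0 : 0 < t) (ht1 : t < n * (q / 2))
    (δ β : ℝ) (hδ : δ = (t : ℝ) / n)
    (hβ : numFun q β = δ * Zfun q β) :
    Real.logb 2 (Nat.card {x : Fin n → ZMod q // leeWtV x = t}) / n ≤ entB q β
    ∧ (Nat.card {x : Fin n → ZMod q // leeWtV x = t} : ℝ)
        ≤ 2 ^ ((n : ℝ) * entB q β) := by
  classical
  have hnpos : (0:ℝ) < n := by exact_mod_cast hn
  have hq0 : 0 < q := lt_of_lt_of_le (by norm_num) hq
  -- Z > 0
  have hZ : 0 < Zfun q β := by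
    apply Finset.sum_pos (fun i _ => Real.exp_pos _)
    exact ⟨0, Finset.mem_range.2 hq0⟩
  -- boltz is positive, ≤ 1
  have hbpos : ∀ i, 0 < boltz q β i := fun i => div_pos (Real.exp_pos _) hZ
  have hble : ∀ i ∈ Finset.range q, boltz q β i ≤ 1 := by
    intro i hi
    rw [boltz, div_le_one hZ]
    exact Finset.single_le_sum (f := fun j => Real.exp (-β * (leeW q j : ℝ)))
      (fun j _ => (Real.exp_pos _).le) hi
  have hln2 : (0:ℝ) < Real.log 2 := Real.log_pos (by norm_num)
  -- entropy formula
  have hent : entB q β = β * δ / Real.log 2 + Real.logb 2 (Zfun q β) := by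
    have hbsum : ∑ i ∈ Finset.range q, boltz q β i = 1 := by
      simp only [boltz, ← Finset.sum_div]
      rw [← Zfun, div_self hZ.ne']
    have hwsum : ∑ i ∈ Finset.range q, (leeW q i : ℝ) * boltz q β i = δ := by
      simp only [boltz, mul_div_assoc']
      rw [← Finset.sum_div, ← numFun, hβ, mul_div_assoc, div_self hZ.ne', mul_one]
    rw [entB]
    have hlogb : ∀ i, Real.logb 2 (boltz q β i)
        = -β * (leeW q i : ℝ) / Real.log 2 - Real.logb 2 (Zfun q β) := by
      intro i
      rw [boltz, Real.logb_div (Real.exp_ne_zero _) hZ.ne', Real.logb,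
        Real.log_exp, Real.logb]
    have hsum : ∑ i ∈ Finset.range q, boltz q β i * Real.logb 2 (boltz q β i)
        = -(β * δ / Real.log 2) - Real.logb 2 (Zfun q β) := by
      simp only [hlogb, mul_sub]
      rw [Finset.sum_sub_distrib, ← Finset.sum_mul, hbsum, one_mul]
      have h2 : ∑ i ∈ Finset.range q, boltz q β i * (-β * (leeW q i : ℝ) / Real.log 2)
          = -β / Real.log 2 * ∑ i ∈ Finset.range q, (leeW q i : ℝ) * boltz q β i := by
        rw [Finset.mul_sum]
        exact Finset.sum_congr rfl fun i _ => by ring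
      rw [h2, hwsum]
      ring
    rw [hsum]; ring
  -- entropy nonneg
  have hHpos : 0 ≤ entB q β := by
    rw [entB, ← Finset.sum_neg_distrib]
    apply Finset.sum_nonneg
    intro i hi
    have : Real.logb 2 (boltz q β i) ≤ 0 :=
      Real.logb_nonpos (by norm_num) (hbpos i).le (hble i hi)
    nlinarith [hbpos i]
  -- cardinality bound
  set N := Nat.card {x : Fin n → ZMod q // leeWtV x = t} with hN
  have hcard : (N : ℝ) * Real.exp (-β * (t:ℝ)) ≤ Zfun q β ^ n := by
    have key : Zfun q β ^ n
        = ∑ x : Fin n → ZMod q, Real.exp (-β * (leeWtV x : ℝ)) := by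
      have h1 : Zfun q β = ∑ a : ZMod q, Real.exp (-β * (leeW q a.val : ℝ)) :=
        (sum_zmod_val (fun i => Real.exp (-β * (leeW q i : ℝ)))).symm
      rw [h1, ← Fin.prod_const n, Fintype.prod_sum
        (f := fun (_ : Fin n) (a : ZMod q) => Real.exp (-β * (leeW q a.val : ℝ)))]
      apply Finset.sum_congr rfl
      intro x _
      rw [← Real.exp_sum]
      congr 1
      rw [leeWtV]
      simp only [leeW]
      push_cast
      rw [Finset.mul_sum]
    rw [key]
    have hNcard : N = (Finset.univ.filter (fun x : Fin n → ZMod q => leeWtV x = t)).card := by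
      rw [hN, Nat.card_eq_fintype_card, Fintype.card_subtype]
    calc (N : ℝ) * Real.exp (-β * (t:ℝ))
        = ∑ x ∈ Finset.univ.filter (fun x : Fin n → ZMod q => leeWtV x = t),
            Real.exp (-β * (leeWtV x : ℝ)) := by
          rw [Finset.sum_congr rfl (fun x hx => by
            rw [(Finset.mem_filter.1 hx).2]), Finset.sum_const, hNcard]
          simp [mul_comm]
      _ ≤ ∑ x : Fin n → ZMod q, Real.exp (-β * (leeWtV x : ℝ)) :=
          Finset.sum_le_sum_of_subset_of_nonneg (Finset.filter_subset _ _)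
            (fun x _ _ => (Real.exp_pos _).le)
  -- rewrite bound as rpow
  have hmain : (N : ℝ) ≤ 2 ^ ((n:ℝ) * entB q β) := by
    have h1 : (N : ℝ) ≤ Zfun q β ^ n * Real.exp (β * (t:ℝ)) := by
      have := mul_le_mul_of_nonneg_right hcard (Real.exp_pos (β * (t:ℝ))).le
      rwa [mul_assoc, ← Real.exp_add, neg_mul, neg_add_cancel, Real.exp_zero,
        mul_one] at this
    refine h1.trans (le_of_eq ?_)
    have hZr : Zfun q β ^ n = (2:ℝ) ^ ((n:ℝ) * Real.logb 2 (Zfun q β)) := by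
      rw [mul_comm, Real.rpow_mul (by norm_num), Real.rpow_logb (by norm_num) (by norm_num) hZ,
        Real.rpow_natCast]
    have hEr : Real.exp (β * (t:ℝ)) = (2:ℝ) ^ (β * (t:ℝ) / Real.log 2) := by
      rw [Real.rpow_def_of_pos (by norm_num)]
      congr 1
      field_simp
    rw [hZr, hEr, ← Real.rpow_add (by norm_num)]
    congr 1
    have hnt : (n:ℝ) * δ = (t:ℝ) := by
      rw [hδ, mul_div_cancel₀ _ hnpos.ne']
    rw [hent, ← hnt]
    ring
  refine ⟨?_, hmain⟩
  rw [div_le_iff₀ hnpos]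
  rcases Nat.eq_zero_or_pos N with h0 | h1
  · rw [h0]
    simpa using mul_nonneg hHpos hnpos.le
  · have hN1 : (1:ℝ) ≤ (N:ℝ) := by exact_mod_cast h1
    have := Real.logb_le_logb_of_le (b := 2) (by norm_num) (by positivity) hmain
    rwa [Real.logb_rpow (by norm_num) (by norm_num), mul_comm] at this
end

section
/- Let q ≥ 2 and n ≥ 1 be integers and let t be an integer with 0 < t < n⌊q/2⌋, and set δ = t/n. Then the normalized logarithmic volume spectrum satisfies ν^{(n)}_t := (1/n) log₂ |B^n_{t,q}| ≤ H_δ⁺; equivalently, the number of vectors in Z_q^n of Lee weight at most t is at most 2^{n H_δ⁺}. -/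
/- ### Auxiliary lemmas -/

theorem sumLee : ∀ q, ∑ i ∈ Finset.range q, leeW q i = q*q/4
  | 0 => by simp [leeW]
  | 1 => by simp [leeW]
  | (q+2) => by
      show ∑ i ∈ Finset.range (q+2), min i (q+2-i) = _
      rw [Finset.sum_range_succ' (fun i => min i (q+2-i)) (q+1)]
      have h1 : ∀ i ∈ Finset.range (q+1), min (i+1) (q+2-(i+1)) = min i (q-i) + 1 := by
        intro i hi
        simp only [Finset.mem_range] at hi
        omega
      rw [Finset.sum_congr rfl h1, Finset.sum_add_distrib, Finset.sum_range_succ]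
      have h2 : ∑ i ∈ Finset.range q, min i (q-i) = q*q/4 := sumLee q
      have h : (q+2)*(q+2) = q*q + 4*q+4 := by ring
      simp only [Finset.sum_const, Finset.card_range, smul_eq_mul]
      omega

lemma sumLee_real (q : ℕ) (hq : 1 ≤ q) :
    ∑ i ∈ Finset.range q, (leeW q i : ℝ) = q * deltaQ q := by
  have h := sumLee q
  have hc : ∑ i ∈ Finset.range q, (leeW q i : ℝ) = ((q*q/4 : ℕ) : ℝ) := by
    rw [← h]; push_cast; ring
  rw [hc]
  unfold deltaQ
  rcases Nat.even_or_odd q with ⟨m, hm⟩ | ⟨m, hm⟩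
  · have hmod : q % 2 = 0 := by omega
    rw [if_pos hmod]
    have : q*q/4 = m*m := by
      subst hm
      have : (m+m)*(m+m) = 4*(m*m) := by ring
      omega
    rw [this, hm]; push_cast; ring
  · have hmod : ¬ q % 2 = 0 := by omega
    rw [if_neg hmod]
    have : q*q/4 = m*m + m := by
      subst hm
      have : (2*m+1)*(2*m+1) = 4*(m*m+m)+1 := by ring
      omega
    rw [this, hm]
    have hq0 : (2*(m:ℝ)+1) ≠ 0 := by positivity
    push_cast
    field_simp
    ring

lemma Zfun_pos (q : ℕ) (β : ℝ) (hq : 1 ≤ q) : 0 < Zfun q β := by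
  apply Finset.sum_pos (fun i _ => Real.exp_pos _)
  simp [Finset.nonempty_range_iff]; omega

lemma deltaQ_pos (q : ℕ) (hq : 2 ≤ q) : 0 < deltaQ q := by
  unfold deltaQ
  split
  · have : (0:ℝ) < q := by positivity
    linarith
  · have h3 : 3 ≤ q := by omega
    have hq3 : (3:ℝ) ≤ q := by exact_mod_cast h3
    have : (0:ℝ) < q := by linarith
    apply div_pos <;> nlinarith

lemma beta_nonneg (q : ℕ) (δ β : ℝ) (hq : 2 ≤ q)
    (hβ : numFun q β = δ * Zfun q β) (hδ : δ ≤ deltaQ q) : 0 ≤ β := by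
  by_contra h
  push_neg at h
  set W := deltaQ q with hW
  set C := Real.exp (-β * W) with hC
  have hWpos : 0 < W := deltaQ_pos q hq
  have key : ∑ i ∈ Finset.range q, ((leeW q i : ℝ) - W) * (Real.exp (-β * (leeW q i:ℝ)) - C)
      = numFun q β - W * Zfun q β := by
    have expand : ∀ i ∈ Finset.range q,
        ((leeW q i : ℝ) - W) * (Real.exp (-β * (leeW q i:ℝ)) - C)
        = (leeW q i : ℝ) * Real.exp (-β * (leeW q i:ℝ))
          - C * (leeW q i : ℝ) - W * Real.exp (-β * (leeW q i:ℝ)) + W * C := by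
      intro i _; ring
    rw [Finset.sum_congr rfl expand]
    simp only [Finset.sum_add_distrib, Finset.sum_sub_distrib, ← Finset.mul_sum,
      Finset.sum_const, Finset.card_range, nsmul_eq_mul]
    rw [sumLee_real q (by omega)]
    unfold numFun Zfun
    ring
  have pos : 0 < ∑ i ∈ Finset.range q, ((leeW q i : ℝ) - W) * (Real.exp (-β * (leeW q i:ℝ)) - C) := by
    apply Finset.sum_pos'
    · intro i _
      rcases le_total ((leeW q i : ℝ)) W with hle | hle
      · have h1 : (leeW q i : ℝ) - W ≤ 0 := by linarith
        have h2 : Real.exp (-β * (leeW q i:ℝ)) - C ≤ 0 := by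
          have : -β * (leeW q i : ℝ) ≤ -β * W := by nlinarith
          simp only [hC, sub_nonpos]
          exact Real.exp_le_exp.2 this
        exact mul_nonneg_of_nonpos_of_nonpos h1 h2
      · apply mul_nonneg
        · linarith
        · have : -β * W ≤ -β * (leeW q i : ℝ) := by nlinarith
          simp only [hC, sub_nonneg]
          exact Real.exp_le_exp.2 this
    · refine ⟨0, by simp [Finset.mem_range]; omega, ?_⟩
      have h0 : leeW q 0 = 0 := by simp [leeW]
      rw [h0]
      apply mul_pos_of_neg_of_neg
      · simpa using hWpos
      · have : (1:ℝ) < C := by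
          rw [hC, show (1:ℝ) = Real.exp 0 from (Real.exp_zero).symm]
          exact Real.exp_lt_exp.2 (by nlinarith)
        simp only [Nat.cast_zero, mul_zero, neg_zero, Real.exp_zero]
        linarith
  have hZ : 0 < Zfun q β := Zfun_pos q β (by omega)
  rw [key, hβ] at pos
  nlinarith

lemma sum_zmod (q : ℕ) [NeZero q] (f : ℕ → ℝ) :
    ∑ a : ZMod q, f a.val = ∑ i ∈ Finset.range q, f i := by
  rw [← Fin.sum_univ_eq_sum_range]
  cases q with
  | zero => exact absurd rfl (NeZero.ne 0)
  | succ m => rfl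

lemma prod_identity (q n : ℕ) [NeZero q] (β : ℝ) :
    ∑ x : Fin n → ZMod q, Real.exp (-β * (leeWtV x : ℝ)) = (Zfun q β) ^ n := by
  have hZ : Zfun q β = ∑ a : ZMod q, Real.exp (-β * (leeW q a.val : ℝ)) :=
    (sum_zmod q _).symm
  rw [hZ, Fintype.sum_pow]
  apply Finset.sum_congr rfl
  intro x _
  rw [← Real.exp_sum]
  congr 1
  unfold leeWtV leeW
  push_cast
  rw [Finset.mul_sum]

lemma entB_eq (q : ℕ) (β δ : ℝ) (hq : 1 ≤ q) (hβ : numFun q β = δ * Zfun q β) :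
    entB q β = β * δ / Real.log 2 + Real.logb 2 (Zfun q β) := by
  have hZ : 0 < Zfun q β := Zfun_pos q β hq
  have hterm : ∀ i ∈ Finset.range q, boltz q β i * Real.logb 2 (boltz q β i)
      = ((-β * (leeW q i : ℝ)) * Real.exp (-β * (leeW q i : ℝ))
         - Real.exp (-β * (leeW q i : ℝ)) * Real.log (Zfun q β)) / (Zfun q β * Real.log 2) := by
    intro i _
    unfold boltz Real.logb
    rw [Real.log_div (Real.exp_ne_zero _) hZ.ne', Real.log_exp]
    field_simp
  rw [entB, Finset.sum_congr rfl hterm, ← Finset.sum_div, Finset.sum_sub_distrib,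
    ← Finset.sum_mul]
  have h1 : ∑ i ∈ Finset.range q, (-β * (leeW q i : ℝ)) * Real.exp (-β * (leeW q i : ℝ))
      = -β * numFun q β := by
    rw [numFun, Finset.mul_sum]
    apply Finset.sum_congr rfl
    intro i _; ring
  have h2 : (∑ i ∈ Finset.range q, Real.exp (-β * (leeW q i : ℝ))) = Zfun q β := rfl
  rw [h1, h2, hβ, Real.logb]
  have hlog2 : Real.log 2 ≠ 0 := by
    have := Real.log_pos (by norm_num : (1:ℝ) < 2)
    linarith
  field_simp
  ring

/-- Growth rate of the volume spectrum: the number of vectors in `Z_q^n` of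
Lee weight at most `t` is at most `2^(n H_δ⁺)` where `δ = t/n`. -/
theorem stmt4 (q n t : ℕ) [NeZero q] (hq : 2 ≤ q) (hn : 1 ≤ n)
    (ht0 : 0 < t) (ht1 : t < n * (q / 2))
    (δ β : ℝ) (hδ : δ = (t : ℝ) / n)
    (hβ : numFun q β = δ * Zfun q β) :
    Real.logb 2 (Nat.card {x : Fin n → ZMod q // leeWtV x ≤ t}) / n
        ≤ (if δ ≤ deltaQ q then entB q β else Real.logb 2 q)
    ∧ (Nat.card {x : Fin n → ZMod q // leeWtV x ≤ t} : ℝ)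
        ≤ 2 ^ ((n : ℝ) * (if δ ≤ deltaQ q then entB q β else Real.logb 2 q)) := by
  have hq1 : 1 ≤ q := by omega
  have hn0 : (0:ℝ) < n := by exact_mod_cast hn
  have hZ : 0 < Zfun q β := Zfun_pos q β hq1
  have hlog2 : (0:ℝ) < Real.log 2 := Real.log_pos (by norm_num)
  haveI : Nonempty {x : Fin n → ZMod q // leeWtV x ≤ t} :=
    ⟨⟨0, by simp [leeWtV, ZMod.val_zero]⟩⟩
  have hNpos : 0 < Nat.card {x : Fin n → ZMod q // leeWtV x ≤ t} := Nat.card_pos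
  have hnδ : (n:ℝ) * δ = t := by
    rw [hδ]; field_simp
  have main : (Nat.card {x : Fin n → ZMod q // leeWtV x ≤ t} : ℝ)
      ≤ 2 ^ ((n : ℝ) * (if δ ≤ deltaQ q then entB q β else Real.logb 2 q)) := by
    by_cases hcase : δ ≤ deltaQ q
    · rw [if_pos hcase]
      have hb : 0 ≤ β := beta_nonneg q δ β hq hβ hcase
      -- counting bound
      have hNcard : Nat.card {x : Fin n → ZMod q // leeWtV x ≤ t}
          = (Finset.univ.filter (fun x : Fin n → ZMod q => leeWtV x ≤ t)).card := by
        rw [Nat.card_eq_fintype_card, Fintype.card_subtype]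
      have hcount : (Nat.card {x : Fin n → ZMod q // leeWtV x ≤ t} : ℝ) * Real.exp (-β * t)
          ≤ (Zfun q β) ^ n := by
        rw [← prod_identity q n β, hNcard]
        rw [show ((Finset.univ.filter (fun x : Fin n → ZMod q => leeWtV x ≤ t)).card : ℝ)
              * Real.exp (-β * t)
            = ∑ _x ∈ Finset.univ.filter (fun x : Fin n → ZMod q => leeWtV x ≤ t),
                Real.exp (-β * t) by simp [mul_comm]]
        calc ∑ _x ∈ Finset.univ.filter (fun x : Fin n → ZMod q => leeWtV x ≤ t),
                Real.exp (-β * t)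
            ≤ ∑ x ∈ Finset.univ.filter (fun x : Fin n → ZMod q => leeWtV x ≤ t),
                Real.exp (-β * (leeWtV x : ℝ)) := by
              apply Finset.sum_le_sum
              intro x hx
              simp only [Finset.mem_filter] at hx
              apply Real.exp_le_exp.2
              have : (leeWtV x : ℝ) ≤ t := by exact_mod_cast hx.2
              nlinarith
          _ ≤ ∑ x : Fin n → ZMod q, Real.exp (-β * (leeWtV x : ℝ)) :=
              Finset.sum_le_sum_of_subset_of_nonneg (Finset.filter_subset _ _)
                (fun _ _ _ => (Real.exp_pos _).le)
      have hrpow : (2:ℝ) ^ ((n:ℝ) * entB q β) = Real.exp (β * t) * (Zfun q β) ^ n := by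
        rw [Real.rpow_def_of_pos (by norm_num : (0:ℝ) < 2)]
        rw [entB_eq q β δ hq1 hβ]
        have hexp : Real.log 2 * ((n:ℝ) * (β * δ / Real.log 2 + Real.logb 2 (Zfun q β)))
            = β * t + (n:ℝ) * Real.log (Zfun q β) := by
          rw [Real.logb, ← hnδ]
          field_simp
        rw [hexp, Real.exp_add, Real.exp_nat_mul, Real.exp_log hZ]
      rw [hrpow]
      have he : 0 < Real.exp (β * t) := Real.exp_pos _
      calc (Nat.card {x : Fin n → ZMod q // leeWtV x ≤ t} : ℝ)
          = ((Nat.card {x : Fin n → ZMod q // leeWtV x ≤ t} : ℝ) * Real.exp (-β * t))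
            * Real.exp (β * t) := by
            rw [mul_assoc, ← Real.exp_add]
            simp
        _ ≤ (Zfun q β) ^ n * Real.exp (β * t) :=
            mul_le_mul_of_nonneg_right hcount he.le
        _ = Real.exp (β * t) * (Zfun q β) ^ n := by ring
    · rw [if_neg hcase]
      have hcard : (Nat.card {x : Fin n → ZMod q // leeWtV x ≤ t} : ℝ) ≤ (q:ℝ) ^ n := by
        have h1 : Nat.card {x : Fin n → ZMod q // leeWtV x ≤ t}
            ≤ Fintype.card (Fin n → ZMod q) := by
          rw [Nat.card_eq_fintype_card]
          exact Fintype.card_subtype_le _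
        have h2 : Fintype.card (Fin n → ZMod q) = q ^ n := by
          simp [ZMod.card]
        rw [h2] at h1
        exact_mod_cast h1
      have hq0 : (0:ℝ) < q := by positivity
      have hrpow : (2:ℝ) ^ ((n:ℝ) * Real.logb 2 q) = (q:ℝ) ^ n := by
        rw [Real.rpow_def_of_pos (by norm_num : (0:ℝ) < 2), Real.logb]
        have : Real.log 2 * ((n:ℝ) * (Real.log q / Real.log 2)) = (n:ℝ) * Real.log q := by
          field_simp
        rw [this, Real.exp_nat_mul, Real.exp_log hq0]
      rw [hrpow]
      exact hcard
  refine ⟨?_, main⟩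
  have hNR : (0:ℝ) < (Nat.card {x : Fin n → ZMod q // leeWtV x ≤ t} : ℝ) := by
    exact_mod_cast hNpos
  have hlogle : Real.logb 2 (Nat.card {x : Fin n → ZMod q // leeWtV x ≤ t})
      ≤ (n:ℝ) * (if δ ≤ deltaQ q then entB q β else Real.logb 2 q) := by
    calc Real.logb 2 (Nat.card {x : Fin n → ZMod q // leeWtV x ≤ t})
        ≤ Real.logb 2 ((2:ℝ) ^ ((n : ℝ) * (if δ ≤ deltaQ q then entB q β else Real.logb 2 q))) := by
          exact Real.logb_le_logb_of_le (by norm_num) hNR main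
      _ = (n : ℝ) * (if δ ≤ deltaQ q then entB q β else Real.logb 2 q) :=
          Real.logb_rpow (by norm_num) (by norm_num)
  calc Real.logb 2 (Nat.card {x : Fin n → ZMod q // leeWtV x ≤ t}) / n
      ≤ ((n:ℝ) * (if δ ≤ deltaQ q then entB q β else Real.logb 2 q)) / n := by
        exact div_le_div_of_nonneg_right hlogle hn0.le
    _ = (if δ ≤ deltaQ q then entB q β else Real.logb 2 q) :=
        mul_div_cancel_left₀ _ hn0.ne'
end

section
/- (Random coding union bound, constant Lee weight channel, ML decoding.) Let q ≥ 2, n ≥ 1, M ≥ 2 be integers, let t be an integer with 0 ≤ t ≤ n⌊q/2⌋, and set R₂ = (log₂ M)/n. Fix any y ∈ Z_q^n and let X̃_2, …, X̃_M be independent random vectors, each uniformly distributed on Z_q^n. Then the probability that some X̃_j lies at Lee distance exactly t from y satisfies P(∃ j ∈ {2,…,M} : w_L(y − X̃_j) = t) ≤ min(1, (M−1)·|S^n_{t,q}|/q^n) ≤ 2^{−n [log₂ q − σ^{(n)}_t − R₂]⁺}. Since over the constant Lee weight channel with error weight t a maximum likelihood decoding error (ties broken in favor of a competing codeword) implies some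 other codeword lies at Lee distance exactly t from the received word, the average ML block error probability of a random code whose M codewords are i.i.d. uniform on Z_q^n is bounded by the same quantity. -/
/-- The cardinality of the Lee sphere `S^n_{t,q}` of radius `t` in `Z_q^n`. -/
noncomputable def sphCard (q n t : ℕ) : ℕ := Nat.card {x : Fin n → ZMod q // leeWtV x = t}

open Finset in
lemma card_eval_card {m : ℕ} {V : Type*} [Fintype V] [DecidableEq V]
    (j : Fin m) (P : V → Prop) [DecidablePred P] :
    Fintype.card {X : Fin m → V // P (X j)} =
      Fintype.card {v : V // P v} * Fintype.card V ^ (m - 1) := by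
  have e : {X : Fin m → V // P (X j)} ≃ {v : V // P v} × ({i : Fin m // i ≠ j} → V) :=
    ((Equiv.funSplitAt j V).subtypeEquiv (fun X => Iff.rfl)).trans
      Equiv.prodSubtypeFstEquivSubtypeProd
  rw [Fintype.card_congr e, Fintype.card_prod, Fintype.card_fun]
  congr 2
  have : Fintype.card {i : Fin m // ¬ (i = j)}
      = Fintype.card (Fin m) - Fintype.card {i : Fin m // i = j} :=
    Fintype.card_subtype_compl _
  simpa [Fintype.card_subtype_eq] using this

/-- Random coding union bound for the constant Lee weight channel under ML
decoding: for `M-1` i.i.d. uniform random competing codewords and any received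
word `y`, the probability that some competitor is at Lee distance exactly `t`
from `y` is at most `min(1, (M-1)|S^n_{t,q}|/q^n) ≤ 2^{-n [log₂ q - σ^{(n)}_t - R₂]⁺}`. -/
theorem stmt6 (q n M t : ℕ) [NeZero q] (hq : 2 ≤ q) (hn : 1 ≤ n) (hM : 2 ≤ M)
    (ht : t ≤ n * (q / 2)) (y : Fin n → ZMod q) :
    ((Nat.card {X : Fin (M - 1) → Fin n → ZMod q // ∃ j, leeWtV (y - X j) = t} : ℝ)
        / (q : ℝ) ^ (n * (M - 1))
      ≤ min 1 (((M : ℝ) - 1) * (sphCard q n t : ℝ) / (q : ℝ) ^ n))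
    ∧ min 1 (((M : ℝ) - 1) * (sphCard q n t : ℝ) / (q : ℝ) ^ n)
        ≤ 2 ^ (-(n : ℝ) * max 0 (Real.logb 2 q
            - Real.logb 2 (sphCard q n t) / n - Real.logb 2 M / n)) := by
  classical
  obtain ⟨k, rfl⟩ : ∃ k, M = k + 2 := ⟨M - 2, by omega⟩
  have hm : k + 2 - 1 = k + 1 := rfl
  rw [hm]
  have hqR : (0:ℝ) < q := by positivity
  have hS : sphCard q n t = Fintype.card {x : Fin n → ZMod q // leeWtV x = t} :=
    Nat.card_eq_fintype_card
  constructor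
  · -- union bound part
    have hcardV : Fintype.card (Fin n → ZMod q) = q ^ n := by
      simp [Fintype.card_fun, ZMod.card]
    have key : Nat.card {X : Fin (k+1) → Fin n → ZMod q // ∃ j, leeWtV (y - X j) = t}
        ≤ (k+1) * (sphCard q n t * (q ^ n) ^ k) := by
      rw [Nat.card_eq_fintype_card, Fintype.card_subtype]
      have hsub : (Finset.univ.filter
            (fun X : Fin (k+1) → Fin n → ZMod q => ∃ j, leeWtV (y - X j) = t))
          ⊆ Finset.univ.biUnion (fun j : Fin (k+1) =>
              Finset.univ.filter
                (fun X : Fin (k+1) → Fin n → ZMod q => leeWtV (y - X j) = t)) := by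
        intro X hX
        simp only [Finset.mem_filter, Finset.mem_univ, true_and] at hX
        obtain ⟨j, hj⟩ := hX
        simp only [Finset.mem_biUnion, Finset.mem_filter, Finset.mem_univ, true_and]
        exact ⟨j, hj⟩
      calc (Finset.univ.filter
            (fun X : Fin (k+1) → Fin n → ZMod q => ∃ j, leeWtV (y - X j) = t)).card
          ≤ (Finset.univ.biUnion (fun j : Fin (k+1) =>
              Finset.univ.filter
                (fun X : Fin (k+1) → Fin n → ZMod q => leeWtV (y - X j) = t))).card :=
            Finset.card_le_card hsub
        _ ≤ ∑ j : Fin (k+1), (Finset.univ.filter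
              (fun X : Fin (k+1) → Fin n → ZMod q => leeWtV (y - X j) = t)).card :=
            Finset.card_biUnion_le
        _ = ∑ j : Fin (k+1),
              Fintype.card {X : Fin (k+1) → Fin n → ZMod q // leeWtV (y - X j) = t} := by
            simp [Fintype.card_subtype]
        _ = ∑ _j : Fin (k+1), sphCard q n t * (q ^ n) ^ k := by
            refine Finset.sum_congr rfl fun j _ => ?_
            have hcc : Fintype.card {v : Fin n → ZMod q // leeWtV (y - v) = t}
                = Fintype.card {x : Fin n → ZMod q // leeWtV x = t} :=
              Fintype.card_congr ((Equiv.subLeft y).subtypeEquiv (fun v => Iff.rfl))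
            rw [card_eval_card j (fun v => leeWtV (y - v) = t), hcardV, hcc, ← hS]
            norm_num
        _ = (k+1) * (sphCard q n t * (q ^ n) ^ k) := by
            simp [Finset.sum_const, mul_comm]
    have total : Nat.card {X : Fin (k+1) → Fin n → ZMod q // ∃ j, leeWtV (y - X j) = t}
        ≤ q ^ (n * (k+1)) := by
      rw [Nat.card_eq_fintype_card]
      calc Fintype.card {X : Fin (k+1) → Fin n → ZMod q // ∃ j, leeWtV (y - X j) = t}
          ≤ Fintype.card (Fin (k+1) → Fin n → ZMod q) := Fintype.card_subtype_le _
        _ = q ^ (n * (k+1)) := by rw [Fintype.card_fun, hcardV, Fintype.card_fin, ← pow_mul]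
    have hqpow : (0:ℝ) < (q:ℝ) ^ (n * (k+1)) := by positivity
    refine le_min ?_ ?_
    · rw [div_le_one hqpow]
      calc (Nat.card {X : Fin (k+1) → Fin n → ZMod q // ∃ j, leeWtV (y - X j) = t} : ℝ)
          ≤ ((q ^ (n * (k+1)) : ℕ) : ℝ) := by exact_mod_cast total
        _ = (q:ℝ) ^ (n * (k+1)) := by push_cast; ring
    · rw [div_le_div_iff₀ hqpow (by positivity)]
      have hsplit : (q:ℝ) ^ (n * (k+1)) = (q:ℝ) ^ n * ((q:ℝ) ^ n) ^ k := by
        rw [← pow_mul, ← pow_add]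
        ring_nf
      calc (Nat.card {X : Fin (k+1) → Fin n → ZMod q // ∃ j, leeWtV (y - X j) = t} : ℝ)
            * (q:ℝ) ^ n
          ≤ (((k+1) * (sphCard q n t * (q ^ n) ^ k) : ℕ) : ℝ) * (q:ℝ) ^ n := by
            gcongr
            all_goals exact_mod_cast key
        _ = (((k+2:ℕ):ℝ) - 1) * (sphCard q n t : ℝ) * ((q:ℝ) ^ n * ((q:ℝ) ^ n) ^ k) := by
            push_cast; ring
        _ = (((k+2:ℕ):ℝ) - 1) * (sphCard q n t : ℝ) * (q:ℝ) ^ (n * (k+1)) := by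
            rw [hsplit]
  · -- analytic part
    set M := k + 2 with hMdef
    set S := sphCard q n t
    set E := Real.logb 2 q - Real.logb 2 S / n - Real.logb 2 M / n with hE
    rcases le_or_gt E 0 with hE0 | hE0
    · rw [max_eq_left hE0]
      simpa using min_le_left 1 (((M : ℝ) - 1) * (S : ℝ) / (q : ℝ) ^ n)
    · rw [max_eq_right hE0.le]
      by_cases hS0 : S = 0
      · have hz : min 1 (((M : ℝ) - 1) * (S : ℝ) / (q : ℝ) ^ n) = 0 := by
          simp [hS0]
        rw [hz]
        positivity
      · have hSpos : (0:ℝ) < S := by exact_mod_cast Nat.pos_of_ne_zero hS0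
        have hMpos : (0:ℝ) < M := by positivity
        have hnne : (n:ℝ) ≠ 0 := by positivity
        have h2 : (2:ℝ) ^ (-(n : ℝ) * E) = (S:ℝ) * M / (q:ℝ) ^ n := by
          have hexp : -(n : ℝ) * E
              = Real.logb 2 S + Real.logb 2 M - (n : ℝ) * Real.logb 2 q := by
            rw [hE]; field_simp; ring
          rw [hexp, Real.rpow_sub (by norm_num), Real.rpow_add (by norm_num),
            Real.rpow_logb (by norm_num) (by norm_num) hSpos,
            Real.rpow_logb (by norm_num) (by norm_num) hMpos]
          congr 1
          rw [mul_comm, Real.rpow_mul (by norm_num : (0:ℝ) ≤ 2), Real.rpow_natCast,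
            Real.rpow_logb (by norm_num) (by norm_num) hqR]
        rw [h2]
        calc min 1 (((M : ℝ) - 1) * (S : ℝ) / (q : ℝ) ^ n)
            ≤ ((M : ℝ) - 1) * (S : ℝ) / (q : ℝ) ^ n := min_le_right _ _
          _ ≤ (S:ℝ) * M / (q:ℝ) ^ n := by
              gcongr ?_ / _
              nlinarith
end

section
/- (Random coding union bound, memoryless Lee channel.) Let q ≥ 2, n ≥ 1, M ≥ 2 be integers, let 0 < δ ≤ δ_q, and set R₂ = (log₂ M)/n. Fix x ∈ Z_q^n, let E = (E_1,…,E_n) have i.i.d. entries with distribution B_δ, set y = x + E and L = w_L(E), and let X̃_2,…,X̃_M be independent random vectors uniform on Z_q^n, independent of E. Then P(∃ j ∈ {2,…,M} : w_L(y − X̃_j) ≤ L) ≤ E[ 2^{−n [log₂ q − ν^{(n)}_L − R₂]⁺} ], where the expectation is over the random Lee weight L. Since over the memoryless Lee channel with parameter δ ≤ δ_q an ML (equivalently, minimum Lee distance) decoding error with ties broken in favor of a competing codeword implies some other codeword lies at Lee distance at most L from the received word, the average block error probability of a random code whose M codewords are i.i.d. uniform on Z_q^n is bounded by the same quantity. 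-/
/-- The cardinality of the Lee ball `B^n_{t,q}` of radius `t` in `Z_q^n`. -/
noncomputable def ballCard (q n t : ℕ) : ℕ :=
  Nat.card {x : Fin n → ZMod q // leeWtV x ≤ t}

/-- The Boltzmann pmf on `Z_q` with parameter `β`, as a function on `ZMod q`. -/
noncomputable def boltZ (q : ℕ) (β : ℝ) (a : ZMod q) : ℝ :=
  Real.exp (-β * (min a.val (q - a.val) : ℝ)) / Zfun q β

lemma card_filter_le {q n M : ℕ} [NeZero q] (y : Fin n → ZMod q) (L : ℕ) (j : Fin (M-1)) :
    Fintype.card {X : Fin (M-1) → Fin n → ZMod q // leeWtV (y - X j) ≤ L}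
      ≤ ballCard q n L * (q ^ n) ^ (M - 2) := by
  classical
  have h1 : Fintype.card {X : Fin (M-1) → Fin n → ZMod q // leeWtV (y - X j) ≤ L}
      ≤ Fintype.card ({v : Fin n → ZMod q // leeWtV (y - v) ≤ L} ×
          ({i : Fin (M-1) // i ≠ j} → (Fin n → ZMod q))) := by
    apply Fintype.card_le_of_injective
      (fun X => (⟨X.1 j, X.2⟩, fun i => X.1 i.1))
    intro X X' h
    have h1 := congrArg Prod.fst h
    have h2 := congrArg Prod.snd h
    simp only [Subtype.mk.injEq] at h1
    ext i
    by_cases hi : i = j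
    · subst hi; exact congrFun h1 _
    · exact congrFun (congrFun h2 ⟨i, hi⟩) _
  have hball : Fintype.card {v : Fin n → ZMod q // leeWtV (y - v) ≤ L} = ballCard q n L := by
    rw [ballCard, Nat.card_eq_fintype_card]
    exact Fintype.card_congr (Equiv.subtypeEquiv (Equiv.subLeft y) (fun a => Iff.rfl))
  have hne : Fintype.card {i : Fin (M-1) // i ≠ j} = M - 2 := by
    have h := Fintype.card_subtype_compl (fun i : Fin (M-1) => i = j)
    rw [Fintype.card_subtype_eq, Fintype.card_fin] at h
    rw [h, Nat.sub_sub]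
  calc Fintype.card {X : Fin (M-1) → Fin n → ZMod q // leeWtV (y - X j) ≤ L}
      ≤ _ := h1
    _ = ballCard q n L * (q ^ n) ^ (M - 2) := by
        rw [Fintype.card_prod, hball, Fintype.card_fun, hne, Fintype.card_fun,
          ZMod.card, Fintype.card_fin]

lemma card_union_le {q n M : ℕ} [NeZero q] (hM : 2 ≤ M) (y : Fin n → ZMod q) (L : ℕ) :
    (Nat.card {X : Fin (M - 1) → Fin n → ZMod q // ∃ j, leeWtV (y - X j) ≤ L})
      ≤ (M - 1) * (ballCard q n L * (q ^ n) ^ (M - 2)) := by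
  classical
  rw [Nat.card_eq_fintype_card, Fintype.card_subtype]
  have hsub : (Finset.univ.filter fun X : Fin (M-1) → Fin n → ZMod q =>
      ∃ j, leeWtV (y - X j) ≤ L) ⊆
      Finset.univ.biUnion (fun j : Fin (M-1) =>
        Finset.univ.filter fun X => leeWtV (y - X j) ≤ L) := by
    intro X hX
    simp only [Finset.mem_filter, Finset.mem_univ, true_and] at hX
    obtain ⟨j, hj⟩ := hX
    simp only [Finset.mem_biUnion, Finset.mem_filter, Finset.mem_univ, true_and]
    exact ⟨j, hj⟩
  calc _ ≤ _ := Finset.card_le_card hsub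
    _ ≤ ∑ j : Fin (M-1), (Finset.univ.filter fun X : Fin (M-1) → Fin n → ZMod q =>
          leeWtV (y - X j) ≤ L).card := Finset.card_biUnion_le
    _ ≤ ∑ _j : Fin (M-1), ballCard q n L * (q ^ n) ^ (M - 2) := by
        refine Finset.sum_le_sum fun j _ => ?_
        rw [← Fintype.card_subtype]
        exact card_filter_le y L j
    _ = (M - 1) * (ballCard q n L * (q ^ n) ^ (M - 2)) := by
        rw [Finset.sum_const, Finset.card_univ, Fintype.card_fin, smul_eq_mul]
lemma ballCard_pos (q n t : ℕ) [NeZero q] : 0 < ballCard q n t := by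
  have : Nonempty {x : Fin n → ZMod q // leeWtV x ≤ t} :=
    ⟨⟨0, by simp [leeWtV]⟩⟩
  exact Nat.card_pos

/-- Random coding union bound for the memoryless Lee channel: with the error
vector `E` having i.i.d. `B_δ` entries and `M-1` i.i.d. uniform competing
codewords, the probability that some competitor is at Lee distance at most
`L = w_L(E)` from the received word `y = x + E` is at most
`E[2^{-n [log₂ q - ν^{(n)}_L - R₂]⁺}]`. -/
theorem stmt10 (q n M : ℕ) [NeZero q] (hq : 2 ≤ q) (hn : 1 ≤ n) (hM : 2 ≤ M)
    (δ β : ℝ) (hδ0 : 0 < δ) (hδ1 : δ ≤ deltaQ q)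
    (hβ : numFun q β = δ * Zfun q β) (x : Fin n → ZMod q) :
    ∑ e : Fin n → ZMod q, (∏ k, boltZ q β (e k)) *
        ((Nat.card {X : Fin (M - 1) → Fin n → ZMod q //
            ∃ j, leeWtV ((x + e) - X j) ≤ leeWtV e} : ℝ) / (q : ℝ) ^ (n * (M - 1)))
      ≤ ∑ e : Fin n → ZMod q, (∏ k, boltZ q β (e k)) *
          2 ^ (-(n : ℝ) * max 0 (Real.logb 2 q
              - Real.logb 2 (ballCard q n (leeWtV e)) / n - Real.logb 2 M / n)) := by
  have hq0 : (0:ℝ) < q := by positivity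
  have hn' : (n:ℝ) ≠ 0 := by positivity
  refine Finset.sum_le_sum fun e _ => ?_
  refine mul_le_mul_of_nonneg_left ?_ ?_
  swap
  · exact Finset.prod_nonneg fun k _ => div_nonneg (Real.exp_nonneg _)
      (Finset.sum_nonneg fun i _ => Real.exp_nonneg _)
  set L := leeWtV e with hL
  set B := ballCard q n L with hB
  have hBpos : (0:ℝ) < B := by exact_mod_cast ballCard_pos q n L
  have hMpos : (0:ℝ) < M := by positivity
  set A := Real.logb 2 q - Real.logb 2 B / n - Real.logb 2 M / n with hA
  by_cases hA0 : A ≤ 0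
  · rw [max_eq_left hA0, mul_zero, Real.rpow_zero]
    rw [div_le_one (by positivity)]
    have h1 : Nat.card {X : Fin (M - 1) → Fin n → ZMod q //
        ∃ j, leeWtV ((x + e) - X j) ≤ L} ≤ q ^ (n * (M-1)) := by
      classical
      calc Nat.card {X : Fin (M - 1) → Fin n → ZMod q //
            ∃ j, leeWtV ((x + e) - X j) ≤ L}
          = Fintype.card {X : Fin (M - 1) → Fin n → ZMod q //
            ∃ j, leeWtV ((x + e) - X j) ≤ L} := Nat.card_eq_fintype_card
        _ ≤ Fintype.card (Fin (M - 1) → Fin n → ZMod q) := Fintype.card_subtype_le _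
        _ = q ^ (n * (M-1)) := by
            rw [Fintype.card_fun, Fintype.card_fun, ZMod.card, Fintype.card_fin,
              Fintype.card_fin, ← pow_mul]
    exact_mod_cast h1
  · push_neg at hA0
    rw [max_eq_right hA0.le]
    have hrw : (2:ℝ) ^ (-(n:ℝ) * A) = (B:ℝ) * M / (q:ℝ) ^ n := by
      have hexp : -(n:ℝ) * A = Real.logb 2 B + Real.logb 2 M - Real.logb 2 q * n := by
        rw [hA]; field_simp; ring
      rw [hexp, Real.rpow_sub two_pos, Real.rpow_add two_pos,
        Real.rpow_logb two_pos (by norm_num) hBpos,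
        Real.rpow_logb two_pos (by norm_num) hMpos,
        Real.rpow_mul (by norm_num : (0:ℝ) ≤ 2),
        Real.rpow_logb two_pos (by norm_num) hq0,
        Real.rpow_natCast]
    rw [hrw, div_le_div_iff₀ (by positivity) (by positivity)]
    have hc : (Nat.card {X : Fin (M - 1) → Fin n → ZMod q //
        ∃ j, leeWtV ((x + e) - X j) ≤ L} : ℝ)
        ≤ ((M-1:ℕ):ℝ) * ((B:ℝ) * ((q:ℝ)^n)^(M-2)) := by
      exact_mod_cast card_union_le hM (x + e) L
    have hsplit : (q:ℝ)^(n*(M-1)) = (q:ℝ)^(n*(M-2)) * (q:ℝ)^n := by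
      rw [← pow_add]; congr 1
      have h3 : M - 1 = (M - 2) + 1 := by omega
      rw [h3, Nat.mul_add, Nat.mul_one]
    calc (Nat.card {X : Fin (M - 1) → Fin n → ZMod q //
            ∃ j, leeWtV ((x + e) - X j) ≤ L} : ℝ) * (q:ℝ)^n
        ≤ (((M-1:ℕ):ℝ) * ((B:ℝ) * ((q:ℝ)^n)^(M-2))) * (q:ℝ)^n :=
          mul_le_mul_of_nonneg_right hc (by positivity)
      _ ≤ ((M:ℝ) * ((B:ℝ) * ((q:ℝ)^n)^(M-2))) * (q:ℝ)^n := by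
          have : ((M-1:ℕ):ℝ) ≤ (M:ℝ) := by exact_mod_cast Nat.sub_le M 1
          gcongr
      _ = (B:ℝ) * M * (q:ℝ)^(n*(M-1)) := by rw [hsplit, ← pow_mul]; ring
end

section
/- (Sphere-packing bound for the memoryless Lee channel.) Let q ≥ 2, n ≥ 1 be integers, let β > 0, and consider the memoryless Lee channel with transition probability P(y|x) = Z(β)^{−n} e^{−β d_L(y,x)} for x, y ∈ Z_q^n, where Z(β) = Σ_{j∈Z_q} e^{−β w_L(j)}. Let C = {x_1,…,x_M} ⊆ Z_q^n be any code with M codewords and let g : Z_q^n → {1,…,M} be any decoding function, with block error probability P_B = 1 − (1/M) Σ_{i=1}^M Σ_{y : g(y) = i} P(y | x_i). Suppose d₀ is a nonnegative integer and ξ a real number satisfying Σ_{d=0}^{d₀−1} |S^n_{d,q}| + ξ = q^n / M and 0 < ξ ≤ |S^n_{d₀,q}|. Then P_B ≥ Z(β)^{−n} [ Σ_{d=d₀+1}^{n⌊q/2⌋} |S^n_{d,q}| e^{−β d} + (|S^n_{d₀,q}| − ξ) e^{−β d₀} ]. -/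
lemma Zfun_eq (q : ℕ) [NeZero q] (β : ℝ) :
    ∑ a : ZMod q, Real.exp (-β * ((min a.val (q - a.val) : ℕ) : ℝ)) = Zfun q β := by
  unfold Zfun leeW
  refine Finset.sum_nbij' (fun a => a.val) (fun i => (i : ZMod q)) ?_ ?_ ?_ ?_ ?_
  · intro a _; exact Finset.mem_range.mpr (ZMod.val_lt a)
  · intro i _; exact Finset.mem_univ _
  · intro a _; exact ZMod.natCast_rightInverse a
  · intro i hi; exact ZMod.val_cast_of_lt (Finset.mem_range.mp hi)
  · intro a _; rfl

lemma sum_exp_eq (q n : ℕ) [NeZero q] (β : ℝ) :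
    ∑ z : Fin n → ZMod q, Real.exp (-β * (leeWtV z : ℝ)) = Zfun q β ^ n := by
  have h1 : ∀ z : Fin n → ZMod q, Real.exp (-β * (leeWtV z : ℝ))
      = ∏ k, Real.exp (-β * ((min (z k).val (q - (z k).val) : ℕ) : ℝ)) := by
    intro z
    rw [← Real.exp_sum, leeWtV]
    push_cast
    rw [Finset.mul_sum]
  simp_rw [h1]
  rw [← Fintype.piFinset_univ, ← Finset.prod_univ_sum
    (fun _ : Fin n => (Finset.univ : Finset (ZMod q)))
    (fun _ a => Real.exp (-β * ((min a.val (q - a.val) : ℕ) : ℝ)))]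
  rw [Finset.prod_const, Finset.card_univ, Fintype.card_fin, Zfun_eq]

lemma sphCard_eq (q n d : ℕ) [NeZero q] :
    sphCard q n d = (Finset.univ.filter (fun z : Fin n → ZMod q => leeWtV z = d)).card := by
  rw [sphCard, Nat.card_eq_fintype_card, Fintype.card_subtype]

lemma leeWtV_le (q n : ℕ) [NeZero q] (z : Fin n → ZMod q) : leeWtV z ≤ n * (q / 2) := by
  rw [leeWtV]
  calc ∑ k, min (z k).val (q - (z k).val) ≤ ∑ _k : Fin n, q / 2 := by
        refine Finset.sum_le_sum fun k _ => ?_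
        have := ZMod.val_lt (z k)
        omega
    _ = n * (q / 2) := by simp [Finset.sum_const, mul_comm]

lemma sum_fiber (q n : ℕ) [NeZero q] (F : ℕ → ℝ) :
    ∑ z : Fin n → ZMod q, F (leeWtV z)
      = ∑ d ∈ Finset.range (n * (q / 2) + 1), (sphCard q n d : ℝ) * F d := by
  rw [← Finset.sum_fiberwise_of_maps_to
    (fun z _ => Finset.mem_range.mpr (Nat.lt_succ_of_le (leeWtV_le q n z)))
    (fun z => F (leeWtV z))]
  refine Finset.sum_congr rfl fun d _ => ?_
  rw [Finset.sum_congr rfl (fun z hz => by rw [(Finset.mem_filter.mp hz).2]),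
    Finset.sum_const, sphCard_eq, nsmul_eq_mul]

lemma sum_inj (q n M : ℕ) [NeZero q] (x : Fin M → Fin n → ZMod q)
    (g : (Fin n → ZMod q) → Fin M) (h : (Fin n → ZMod q) → ℝ) (hh : ∀ z, 0 ≤ h z) :
    ∑ y : Fin n → ZMod q, h (y - x (g y)) ≤ (M : ℝ) * ∑ z : Fin n → ZMod q, h z := by
  have hinj : Set.InjOn (fun y : Fin n → ZMod q =>
      ((g y, y - x (g y)) : Fin M × (Fin n → ZMod q)))
      ↑(Finset.univ : Finset (Fin n → ZMod q)) := by
    intro y _ y' _ hyy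
    have h1 : g y = g y' := congrArg Prod.fst hyy
    have h2 : y - x (g y) = y' - x (g y') := congrArg Prod.snd hyy
    rw [h1] at h2
    exact sub_left_injective h2
  calc ∑ y : Fin n → ZMod q, h (y - x (g y))
      = ∑ p ∈ Finset.univ.image (fun y : Fin n → ZMod q => (g y, y - x (g y))), h p.2 := by
        rw [Finset.sum_image (fun a ha b hb hab => hinj ha hb hab)]
    _ ≤ ∑ p : Fin M × (Fin n → ZMod q), h p.2 :=
        Finset.sum_le_sum_of_subset_of_nonneg (Finset.subset_univ _) (fun p _ _ => hh p.2)
    _ = (M : ℝ) * ∑ z : Fin n → ZMod q, h z := by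
        rw [Fintype.sum_prod_type]
        simp [Finset.sum_const, Finset.card_univ, nsmul_eq_mul]

/-- Sphere-packing bound for the memoryless Lee channel: any code with `M`
codewords `x i` and any decoding function `g` has block error probability at
least `Z(β)^{-n} [ Σ_{d=d₀+1}^{n⌊q/2⌋} |S^n_{d,q}| e^{-βd} + (|S^n_{d₀,q}| - ξ) e^{-βd₀} ]`,
where `d₀, ξ` satisfy `Σ_{d<d₀} |S^n_{d,q}| + ξ = q^n/M` and `0 < ξ ≤ |S^n_{d₀,q}|`. -/
theorem stmt12 (q n M : ℕ) [NeZero q] (hq : 2 ≤ q) (hn : 1 ≤ n) (hM : 1 ≤ M)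
    (β : ℝ) (hβ : 0 < β)
    (x : Fin M → Fin n → ZMod q) (g : (Fin n → ZMod q) → Fin M)
    (d₀ : ℕ) (ξ : ℝ)
    (hsum : (∑ d ∈ Finset.range d₀, (sphCard q n d : ℝ)) + ξ = (q : ℝ) ^ n / M)
    (hξ0 : 0 < ξ) (hξ1 : ξ ≤ (sphCard q n d₀ : ℝ)) :
    1 - (1 / (M : ℝ)) * ∑ y : Fin n → ZMod q,
        Real.exp (-β * (leeWtV (y - x (g y)) : ℝ)) / (Zfun q β) ^ n
      ≥ ((Zfun q β) ^ n)⁻¹ *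
          ((∑ d ∈ Finset.Icc (d₀ + 1) (n * (q / 2)),
              (sphCard q n d : ℝ) * Real.exp (-β * (d : ℝ)))
            + ((sphCard q n d₀ : ℝ) - ξ) * Real.exp (-β * (d₀ : ℝ))) := by
  have hMR : (0 : ℝ) < M := by exact_mod_cast Nat.lt_of_lt_of_le Nat.zero_lt_one hM
  have hZpos : 0 < Zfun q β :=
    Finset.sum_pos (fun i _ => Real.exp_pos _) ⟨0, Finset.mem_range.mpr (by omega)⟩
  have hZn : 0 < Zfun q β ^ n := pow_pos hZpos n
  set D := n * (q / 2) with hD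
  -- d₀ ≤ D
  have hd0D : d₀ ≤ D := by
    have hpos : 0 < sphCard q n d₀ := by
      by_contra hc
      push_neg at hc
      interval_cases h : sphCard q n d₀
      · simp [h] at hξ1; linarith
    rw [sphCard] at hpos
    obtain ⟨⟨z, hz⟩⟩ := (Nat.card_pos_iff.mp hpos).1
    rw [← hz]
    exact leeWtV_le q n z
  -- monotonicity of e
  have hmono : ∀ d d' : ℕ, d ≤ d' →
      Real.exp (-β * (d' : ℝ)) ≤ Real.exp (-β * (d : ℝ)) := by
    intro d d' hdd
    apply Real.exp_le_exp.mpr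
    have : (d : ℝ) ≤ (d' : ℝ) := by exact_mod_cast hdd
    nlinarith
  set t := Real.exp (-β * (d₀ : ℝ)) with ht
  -- hMq
  have hMq : (M : ℝ) * (∑ d ∈ Finset.range d₀, (sphCard q n d : ℝ)) + M * ξ = (q : ℝ) ^ n := by
    rw [eq_div_iff (ne_of_gt hMR)] at hsum
    linarith [hsum]
  have hcard : (Fintype.card (Fin n → ZMod q) : ℝ) = (q : ℝ) ^ n := by
    simp [ZMod.card]
  -- Step: bound the decoder sum
  set Ssum := ∑ y : Fin n → ZMod q, Real.exp (-β * (leeWtV (y - x (g y)) : ℝ)) with hSsum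
  have hstep3 : ∑ z : Fin n → ZMod q, max (Real.exp (-β * (leeWtV z : ℝ)) - t) 0
      = ∑ d ∈ Finset.range d₀, (sphCard q n d : ℝ) * (Real.exp (-β * (d : ℝ)) - t) := by
    rw [sum_fiber q n (fun d => max (Real.exp (-β * (d : ℝ)) - t) 0)]
    rw [Finset.range_eq_Ico, ← Finset.sum_Ico_consecutive _ (Nat.zero_le d₀)
      (by omega : d₀ ≤ D + 1)]
    have h2 : ∑ d ∈ Finset.Ico d₀ (D + 1),
        (sphCard q n d : ℝ) * max (Real.exp (-β * (d : ℝ)) - t) 0 = 0 := by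
      refine Finset.sum_eq_zero fun d hd => ?_
      have hdge : d₀ ≤ d := (Finset.mem_Ico.mp hd).1
      have : Real.exp (-β * (d : ℝ)) ≤ t := hmono d₀ d hdge
      rw [max_eq_right (by linarith), mul_zero]
    rw [h2, add_zero, ← Finset.range_eq_Ico]
    refine Finset.sum_congr rfl fun d hd => ?_
    have hdlt : d ≤ d₀ := le_of_lt (Finset.mem_range.mp hd)
    have : t ≤ Real.exp (-β * (d : ℝ)) := hmono d d₀ hdlt
    rw [max_eq_left (by linarith)]
  have hkey : Ssum ≤ (M : ℝ) * ((∑ d ∈ Finset.range d₀,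
      (sphCard q n d : ℝ) * Real.exp (-β * (d : ℝ))) + ξ * t) := by
    have hstep1 : Ssum ≤ (q : ℝ) ^ n * t
        + ∑ y : Fin n → ZMod q, max (Real.exp (-β * (leeWtV (y - x (g y)) : ℝ)) - t) 0 := by
      have h1 : Ssum ≤ ∑ y : Fin n → ZMod q,
          (t + max (Real.exp (-β * (leeWtV (y - x (g y)) : ℝ)) - t) 0) := by
        refine Finset.sum_le_sum fun y _ => ?_
        have := le_max_left (Real.exp (-β * (leeWtV (y - x (g y)) : ℝ)) - t) 0
        linarith
      rw [Finset.sum_add_distrib, Finset.sum_const, Finset.card_univ, nsmul_eq_mul,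
        hcard] at h1
      exact h1
    have hstep2 : ∑ y : Fin n → ZMod q,
        max (Real.exp (-β * (leeWtV (y - x (g y)) : ℝ)) - t) 0
        ≤ (M : ℝ) * ∑ z : Fin n → ZMod q, max (Real.exp (-β * (leeWtV z : ℝ)) - t) 0 :=
      sum_inj q n M x g (fun z => max (Real.exp (-β * (leeWtV z : ℝ)) - t) 0)
        (fun z => le_max_right _ _)
    have halg : (q : ℝ) ^ n * t + (M : ℝ) * (∑ d ∈ Finset.range d₀,
        (sphCard q n d : ℝ) * (Real.exp (-β * (d : ℝ)) - t))
        = (M : ℝ) * ((∑ d ∈ Finset.range d₀,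
          (sphCard q n d : ℝ) * Real.exp (-β * (d : ℝ))) + ξ * t) := by
      have hexp : ∑ d ∈ Finset.range d₀, (sphCard q n d : ℝ) * (Real.exp (-β * (d : ℝ)) - t)
          = (∑ d ∈ Finset.range d₀, (sphCard q n d : ℝ) * Real.exp (-β * (d : ℝ)))
            - t * ∑ d ∈ Finset.range d₀, (sphCard q n d : ℝ) := by
        rw [Finset.mul_sum]
        rw [← Finset.sum_sub_distrib]
        exact Finset.sum_congr rfl fun d _ => by ring
      rw [hexp]
      linear_combination (-t) * hMq
    calc Ssum ≤ (q : ℝ) ^ n * t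
          + ∑ y : Fin n → ZMod q, max (Real.exp (-β * (leeWtV (y - x (g y)) : ℝ)) - t) 0 :=
          hstep1
      _ ≤ (q : ℝ) ^ n * t
          + (M : ℝ) * ∑ z : Fin n → ZMod q, max (Real.exp (-β * (leeWtV z : ℝ)) - t) 0 := by
          linarith
      _ = (q : ℝ) ^ n * t + (M : ℝ) * (∑ d ∈ Finset.range d₀,
          (sphCard q n d : ℝ) * (Real.exp (-β * (d : ℝ)) - t)) := by rw [hstep3]
      _ = _ := halg
  -- identity for Z^n
  have hZiden : Zfun q β ^ n
      = ∑ d ∈ Finset.range (D + 1), (sphCard q n d : ℝ) * Real.exp (-β * (d : ℝ)) := by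
    rw [← sum_exp_eq q n β, sum_fiber q n (fun d => Real.exp (-β * (d : ℝ)))]
  -- split the range
  have hsplit : ∑ d ∈ Finset.range (D + 1), (sphCard q n d : ℝ) * Real.exp (-β * (d : ℝ))
      = (∑ d ∈ Finset.range d₀, (sphCard q n d : ℝ) * Real.exp (-β * (d : ℝ)))
        + ((sphCard q n d₀ : ℝ) * t
        + ∑ d ∈ Finset.Icc (d₀ + 1) D, (sphCard q n d : ℝ) * Real.exp (-β * (d : ℝ))) := by
    rw [Finset.range_eq_Ico, ← Finset.sum_Ico_consecutive _ (Nat.zero_le d₀)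
      (by omega : d₀ ≤ D + 1), ← Finset.range_eq_Ico]
    congr 1
    rw [Finset.Ico_add_one_right_eq_Icc, Finset.Icc_eq_cons_Ioc hd0D, Finset.sum_cons,
      ← Finset.Icc_add_one_left_eq_Ioc]
  -- finish
  rw [ge_iff_le, ← Finset.sum_div]
  rw [← hSsum]
  have hfinal : ((Zfun q β) ^ n)⁻¹ *
      ((∑ d ∈ Finset.Icc (d₀ + 1) D, (sphCard q n d : ℝ) * Real.exp (-β * (d : ℝ)))
        + ((sphCard q n d₀ : ℝ) - ξ) * t)
      ≤ 1 - 1 / (M : ℝ) * (Ssum / Zfun q β ^ n) := by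
    rw [← sub_nonneg]
    have heq : 1 - 1 / (M : ℝ) * (Ssum / Zfun q β ^ n) - ((Zfun q β) ^ n)⁻¹ *
        ((∑ d ∈ Finset.Icc (d₀ + 1) D, (sphCard q n d : ℝ) * Real.exp (-β * (d : ℝ)))
          + ((sphCard q n d₀ : ℝ) - ξ) * t)
        = (Zfun q β ^ n
          - ((∑ d ∈ Finset.Icc (d₀ + 1) D, (sphCard q n d : ℝ) * Real.exp (-β * (d : ℝ)))
            + ((sphCard q n d₀ : ℝ) - ξ) * t)
          - Ssum / M) / Zfun q β ^ n := by
      field_simp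
      ring
    rw [heq]
    apply div_nonneg _ (le_of_lt hZn)
    have hSM : Ssum / M ≤ (∑ d ∈ Finset.range d₀,
        (sphCard q n d : ℝ) * Real.exp (-β * (d : ℝ))) + ξ * t := by
      rw [div_le_iff₀ hMR]
      linarith [hkey]
    rw [hZiden, hsplit]
    have := div_nonneg (le_of_lt hZn) (le_of_lt hZn)
    linarith [hSM]
  exact hfinal
end
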